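/- arXiv:1003.4595 — 3 statements merged into one kernel-verified Lean document; each statement's English description precedes it below -/
import Mathlib

section
/- Let μ be a fuzzy set of an MTL-algebra L. Then for every t ∈ (0, 0.5] the q-level set F_q(t) = {x ∈ L : μ(x) + t > 1} is either empty or a filter of L if and only if μ is an (∈̄,∈̄∨q̄)-fuzzy filter of L. -/
/-- An MTL-algebra: a bounded lattice with `⊥ ≠ ⊤`, a product `odot` and residuum `rimp`,
where `odot` is associative, commutative and monotone in each argument, `⊤` is a unit,
the Galois correspondence holds and prelinearity holds. -/
class MTL (L : Type*) extends Lattice L, BoundedOrder L where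
  odot : L → L → L
  rimp : L → L → L
  bot_ne_top : (⊥ : L) ≠ ⊤
  odot_assoc : ∀ x y z : L, odot (odot x y) z = odot x (odot y z)
  odot_comm : ∀ x y : L, odot x y = odot y x
  odot_mono_left : ∀ x y z : L, x ≤ y → odot x z ≤ odot y z
  odot_mono_right : ∀ x y z : L, x ≤ y → odot z x ≤ odot z y
  odot_top : ∀ x : L, odot x ⊤ = x
  galois : ∀ x y z : L, odot x y ≤ z ↔ x ≤ rimp y z
  prelinear : ∀ x y : L, rimp x y ⊔ rimp y x = ⊤

open MTL

variable {L : Type*} [MTL L]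

/-- A subset `A` is a filter: `1 ∈ A` and it is closed under modus ponens. -/
def IsFilter' (A : Set L) : Prop :=
  (⊤ : L) ∈ A ∧ ∀ x y : L, x ∈ A → rimp x y ∈ A → y ∈ A

/-- An (∈̄,∈̄∨q̄)-fuzzy filter: `max(μ(1), 0.5) ≥ μ(x)` and
`max(μ(y), 0.5) ≥ min(μ(x → y), μ(x))`. -/
def IsBarFuzzyFilter (μ : L → ℝ) : Prop :=
  (∀ x : L, max (μ ⊤) (1/2) ≥ μ x) ∧
    ∀ x y : L, max (μ y) (1/2) ≥ min (μ (rimp x y)) (μ x)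

/-! `x ∈ F_q(t)` means `μ x > 1 - t`, and for `t ∈ (0, 1/2]` the thresholds `1 - t` sweep out
`[1/2, 1)`. For `a ≤ 1`, the inequality `a ≤ max b (1/2)` says precisely that `b` exceeds every
such threshold that `a` exceeds. Applied to both defining inequalities of an
(∈̄,∈̄∨q̄)-fuzzy filter, this turns them into the two filter axioms for every nonempty `F_q(t)`. -/

theorem le_max_one_half_iff_forall_lt_add {a b : ℝ} (ha : a ≤ 1) :
    a ≤ max b (1/2) ↔ ∀ t : ℝ, 0 < t → t ≤ 1/2 → 1 < a + t → 1 < b + t := by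
  constructor
  · intro hab t _ ht2 hat
    rcases le_max_iff.mp hab with hb | hb <;> linarith
  · intro h
    by_contra! hab
    obtain ⟨hba, hhalf⟩ := max_lt_iff.mp hab
    -- `t = min (1/2) (1 - b)` separates the two: `1 < a + t` but `b + t ≤ 1`
    have := h (min (1/2) (1 - b)) (lt_min (by norm_num) (by linarith)) (min_le_left _ _)
      (by rw [← min_add_add_left]; exact lt_min (by linarith) (by linarith))
    linarith [min_le_right (1/2 : ℝ) (1 - b)]

theorem eq_empty_or_isFilter'_iff {A : Set L} :
    A = ∅ ∨ IsFilter' A ↔ (∀ x ∈ A, ⊤ ∈ A) ∧ ∀ x y : L, x ∈ A → rimp x y ∈ A → y ∈ A := by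
  rcases A.eq_empty_or_nonempty with rfl | ⟨x, hx⟩
  · simp
  · simp only [IsFilter', A.nonempty_iff_ne_empty.mp ⟨x, hx⟩, false_or]
    exact ⟨fun h => ⟨fun _ _ => h.1, h.2⟩, fun h => ⟨h.1 x hx, h.2⟩⟩

theorem stmt_4_general (μ : L → ℝ) (hμ1 : ∀ x : L, μ x ≤ 1) :
    (∀ t : ℝ, 0 < t → t ≤ 1/2 → ({x : L | 1 < μ x + t} = ∅ ∨ IsFilter' {x : L | 1 < μ x + t})) ↔ IsBarFuzzyFilter μ := by
  simp only [eq_empty_or_isFilter'_iff, IsBarFuzzyFilter, ge_iff_le, Set.mem_ofPred_eq,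
    le_max_one_half_iff_forall_lt_add (hμ1 _),
    le_max_one_half_iff_forall_lt_add ((min_le_right _ _).trans (hμ1 _)),
    ← min_add_add_right, lt_min_iff]
  exact ⟨fun h => ⟨fun x t h0 h2 hx => (h t h0 h2).1 x hx,
      fun x y t h0 h2 hxy => (h t h0 h2).2 x y hxy.2 hxy.1⟩,
    fun h t h0 h2 => ⟨fun x hx => h.1 x t h0 h2 hx, fun x y hx hr => h.2 x y t h0 h2 ⟨hr, hx⟩⟩⟩

theorem stmt_4 (μ : L → ℝ) (hμ0 : ∀ x : L, 0 ≤ μ x) (hμ1 : ∀ x : L, μ x ≤ 1) :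
    (∀ t : ℝ, 0 < t → t ≤ 1/2 → ({x : L | 1 < μ x + t} = ∅ ∨ IsFilter' {x : L | 1 < μ x + t})) ↔ IsBarFuzzyFilter μ :=
  stmt_4_general μ hμ1
end

section
/- Let μ be a fuzzy set of an MTL-algebra L. Then μ is an (∈̄,∈̄∨q̄)-fuzzy Boolean filter of L if and only if for every t ∈ (0.5, 1] the ∈-level set F(t) = {x ∈ L : μ(x) ≥ t} is either empty or a Boolean filter of L. -/
open MTL

variable {L : Type*} [MTL L]

/-- A Boolean filter: a filter containing `x ∨ x'` for all `x`, where `x' = x → 0`. -/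
def IsBooleanFilter (A : Set L) : Prop :=
  IsFilter' A ∧ ∀ x : L, x ⊔ rimp x ⊥ ∈ A

/-- An (∈̄,∈̄∨q̄)-fuzzy Boolean filter:
`max(μ(x → z), 0.5) ≥ min(μ(x → (z' → y)), μ(y → z))`. -/
def IsBarFuzzyBooleanFilter (μ : L → ℝ) : Prop :=
  IsBarFuzzyFilter μ ∧
    ∀ x y z : L, max (μ (rimp x z)) (1/2) ≥
      min (μ (rimp x (rimp (rimp z ⊥) y))) (μ (rimp y z))

/-!
Each defining inequality of an (∈̄,∈̄∨q̄)-fuzzy Boolean filter has the shape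
`min a b ≤ max c (1/2)`, and for values in `[0, 1]` this says exactly that every level
`t ∈ (1/2, 1]` reached by both `a` and `b` is reached by `c`. So `μ` is such a filter iff every
level set `F(t)` is closed under `x ∈ F(t) ⟹ 1 ∈ F(t)`, modus ponens, and the Boolean rule
`x → (z' → y), y → z ⊢ x → z`. A nonempty set with these closure properties is precisely a
Boolean filter: the Boolean rule with `x = 1`, `y = z = a ∨ a'` yields `a ∨ a'` in the set, and
conversely `z ∨ z'` in the set together with `(z ∨ z') → (x → z) = z' → (x → z)` gives the rule.
-/

namespace MTL

lemma odot_le_left (x y : L) : odot x y ≤ x :=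
  calc odot x y ≤ odot x ⊤ := odot_mono_right _ _ _ le_top
    _ = x := odot_top x

lemma rimp_odot_le (x y : L) : odot (rimp x y) x ≤ y :=
  (galois _ _ _).mpr le_rfl

lemma le_rimp_rimp_iff (u x y z : L) : u ≤ rimp x (rimp y z) ↔ odot u (odot x y) ≤ z := by
  rw [← galois, ← galois, odot_assoc]

lemma rimp_eq_top_of_le {x y : L} (h : x ≤ y) : rimp x y = ⊤ :=
  top_le_iff.mp <| (galois ⊤ x y).mp (by rwa [odot_comm, odot_top])

lemma top_rimp (x : L) : rimp ⊤ x = x :=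
  le_antisymm (by simpa only [odot_top] using rimp_odot_le ⊤ x)
    ((galois x ⊤ x).mp (odot_top x).le)

lemma le_rimp (x y : L) : x ≤ rimp y x :=
  (galois x y x).mp (odot_le_left x y)

lemma rimp_le_rimp_right {x y : L} (h : x ≤ y) (z : L) : rimp y z ≤ rimp x z :=
  (galois _ _ _).mp ((odot_mono_right _ _ _ h).trans (rimp_odot_le y z))

lemma rimp_left_comm (x y z : L) : rimp x (rimp y z) = rimp y (rimp x z) := by
  apply le_antisymm
  · rw [le_rimp_rimp_iff, odot_comm y x, ← le_rimp_rimp_iff]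
  · rw [le_rimp_rimp_iff, odot_comm x y, ← le_rimp_rimp_iff]

lemma rimp_le_rimp_rimp_rimp (x y z : L) : rimp y z ≤ rimp (rimp x y) (rimp x z) := by
  rw [le_rimp_rimp_iff]
  exact (odot_mono_right _ _ _ (rimp_odot_le x y)).trans (rimp_odot_le y z)

lemma sup_rimp_distrib (x y z : L) : rimp (x ⊔ y) z = rimp x z ⊓ rimp y z := by
  refine le_antisymm (le_inf (rimp_le_rimp_right le_sup_left z)
    (rimp_le_rimp_right le_sup_right z)) ?_
  rw [← galois, odot_comm, galois]
  refine sup_le ((galois _ _ _).mp ?_) ((galois _ _ _).mp ?_) <;> rw [odot_comm]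
  · exact (odot_mono_left _ _ _ inf_le_left).trans (rimp_odot_le x z)
  · exact (odot_mono_left _ _ _ inf_le_right).trans (rimp_odot_le y z)

end MTL

lemma IsFilter'.mem_of_le {A : Set L} (hA : IsFilter' A) {x y : L} (hx : x ∈ A) (h : x ≤ y) :
    y ∈ A :=
  hA.2 x y hx (by rw [rimp_eq_top_of_le h]; exact hA.1)

lemma IsBooleanFilter.rimp_mem {A : Set L} (hA : IsBooleanFilter A) {x y z : L}
    (hxy : rimp x (rimp (rimp z ⊥) y) ∈ A) (hyz : rimp y z ∈ A) : rimp x z ∈ A := by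
  obtain ⟨hF, hbool⟩ := hA
  set w := rimp x z
  have hxw : rimp (rimp x y) w ∈ A := hF.mem_of_le hyz (rimp_le_rimp_rimp_rimp x y z)
  rw [rimp_left_comm] at hxy
  have hnw : rimp (rimp z ⊥) w ∈ A :=
    hF.2 _ _ hxy (hF.mem_of_le hxw (rimp_le_rimp_rimp_rimp _ _ _))
  have hsup : rimp (z ⊔ rimp z ⊥) w = rimp (rimp z ⊥) w := by
    rw [sup_rimp_distrib, rimp_eq_top_of_le (le_rimp z x), top_inf_eq]
  exact hF.2 _ w (hbool z) (hsup ▸ hnw)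

lemma isBooleanFilter_of_rimp_mem {A : Set L} (hA : IsFilter' A)
    (h : ∀ x y z : L, rimp x (rimp (rimp z ⊥) y) ∈ A → rimp y z ∈ A → rimp x z ∈ A) :
    IsBooleanFilter A := by
  refine ⟨hA, fun a => ?_⟩
  set z := a ⊔ rimp a ⊥
  have hnz : rimp (rimp z ⊥) z = ⊤ :=
    rimp_eq_top_of_le ((rimp_le_rimp_right le_sup_left ⊥).trans le_sup_right)
  simpa only [top_rimp] using
    h ⊤ z z (by rw [top_rimp, hnz]; exact hA.1) (by rw [rimp_eq_top_of_le le_rfl]; exact hA.1)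

lemma eq_empty_or_isBooleanFilter_iff (A : Set L) :
    A = ∅ ∨ IsBooleanFilter A ↔
      (∀ x, x ∈ A → (⊤ : L) ∈ A) ∧ (∀ x y : L, x ∈ A → rimp x y ∈ A → y ∈ A) ∧
        ∀ x y z : L, rimp x (rimp (rimp z ⊥) y) ∈ A → rimp y z ∈ A → rimp x z ∈ A := by
  constructor
  · rintro (rfl | hA)
    · simp
    · exact ⟨fun _ _ => hA.1.1, hA.1.2, fun _ _ _ => hA.rimp_mem⟩
  · rintro ⟨htop, hmp, hbool⟩
    rcases A.eq_empty_or_nonempty with hempty | ⟨a, ha⟩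
    · exact Or.inl hempty
    · exact Or.inr (isBooleanFilter_of_rimp_mem ⟨htop a ha, hmp⟩ hbool)

lemma min_le_max_half_iff {a b c : ℝ} (ha : a ≤ 1) :
    min a b ≤ max c (1/2) ↔ ∀ t : ℝ, 1/2 < t → t ≤ 1 → t ≤ a → t ≤ b → t ≤ c := by
  constructor
  · intro h t ht _ hta htb
    have := (le_min hta htb).trans h
    rcases le_max_iff.mp this with hc | hc
    · exact hc
    · linarith
  · intro h
    by_contra! hlt
    have hhalf : 1/2 < min a b := (le_max_right _ _).trans_lt hlt
    have := h _ hhalf ((min_le_left a b).trans ha) (min_le_left a b) (min_le_right a b)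
    exact hlt.not_ge (this.trans (le_max_left c _))

lemma le_max_half_iff {a c : ℝ} (ha : a ≤ 1) :
    a ≤ max c (1/2) ↔ ∀ t : ℝ, 1/2 < t → t ≤ 1 → t ≤ a → t ≤ c := by
  simpa using min_le_max_half_iff (b := a) (c := c) ha

theorem stmt_10_general (μ : L → ℝ) (hμ1 : ∀ x : L, μ x ≤ 1) :
    IsBarFuzzyBooleanFilter μ ↔ (∀ t : ℝ, 1/2 < t → t ≤ 1 → ({x : L | t ≤ μ x} = ∅ ∨ IsBooleanFilter {x : L | t ≤ μ x})) := by
  simp only [IsBarFuzzyBooleanFilter, IsBarFuzzyFilter, ge_iff_le, le_max_half_iff (hμ1 _),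
    min_le_max_half_iff (hμ1 _), eq_empty_or_isBooleanFilter_iff, Set.mem_ofPred_eq]
  constructor
  · rintro ⟨⟨htop, hmp⟩, hbool⟩ t ht ht1
    exact ⟨fun x => htop x t ht ht1, fun x y hx hxy => hmp x y t ht ht1 hxy hx,
      fun x y z => hbool x y z t ht ht1⟩
  · intro h
    exact ⟨⟨fun x t ht ht1 => (h t ht ht1).1 x,
      fun x y t ht ht1 hxy hx => (h t ht ht1).2.1 x y hx hxy⟩,
      fun x y z t ht ht1 => (h t ht ht1).2.2 x y z⟩

theorem stmt_10 (μ : L → ℝ) (hμ0 : ∀ x : L, 0 ≤ μ x) (hμ1 : ∀ x : L, μ x ≤ 1) :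
    IsBarFuzzyBooleanFilter μ ↔ (∀ t : ℝ, 1/2 < t → t ≤ 1 → ({x : L | t ≤ μ x} = ∅ ∨ IsBooleanFilter {x : L | t ≤ μ x})) :=
  stmt_10_general μ hμ1
end

section
/- Let μ be a fuzzy set of an MTL-algebra L. Then for every t ∈ (0,1] the ∈-level set F(t) = {x ∈ L : μ(x) ≥ t} is either empty or an MV-filter of L if and only if μ is a fuzzy MV-filter of L. -/
open MTL

variable {L : Type*} [MTL L]

/-- A fuzzy filter: `μ(1) ≥ μ(x)` and `μ(y) ≥ min(μ(x → y), μ(x))`. -/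
def IsFuzzyFilter (μ : L → ℝ) : Prop :=
  (∀ x : L, μ ⊤ ≥ μ x) ∧ ∀ x y : L, μ y ≥ min (μ (rimp x y)) (μ x)

/-- An MV-filter: a filter such that `x → y ∈ A` implies `((y → x) → x) → y ∈ A`. -/
def IsMVFilter (A : Set L) : Prop :=
  IsFilter' A ∧ ∀ x y : L, rimp x y ∈ A → rimp (rimp (rimp y x) x) y ∈ A

/-- A fuzzy MV-filter: a fuzzy filter with `μ(((y → x) → x) → y) ≥ μ(x → y)`. -/
def IsFuzzyMVFilter (μ : L → ℝ) : Prop :=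
  IsFuzzyFilter μ ∧ ∀ x y : L, μ (rimp (rimp (rimp y x) x) y) ≥ μ (rimp x y)

/-! Each inequality `s ≤ μ b` defining a fuzzy (MV-)filter, where `s` is a value or a minimum
of values of `μ`, says that `b` lies in the level set `{x | s ≤ μ x}` whenever the premises do.
It therefore follows from the (MV-)filter property of that single level set, which is nonempty
because it contains a premise; heights `s ≤ 0` are covered by `μ ≥ 0`, and `s ≤ 1` holds
because `μ ≤ 1`. Conversely, the fuzzy inequalities transfer membership to every level set. -/

variable {μ : L → ℝ}

theorem IsFuzzyFilter.isFilter'_levelSet (h : IsFuzzyFilter μ) {t : ℝ}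
    (hne : {x : L | t ≤ μ x}.Nonempty) : IsFilter' {x : L | t ≤ μ x} := by
  obtain ⟨a, ha⟩ := hne
  exact ⟨ha.trans (h.1 a), fun x y hx hxy => (le_min hxy hx).trans (h.2 x y)⟩

theorem IsFuzzyMVFilter.isMVFilter_levelSet (h : IsFuzzyMVFilter μ) {t : ℝ}
    (hne : {x : L | t ≤ μ x}.Nonempty) : IsMVFilter {x : L | t ≤ μ x} :=
  ⟨h.1.isFilter'_levelSet hne, fun x y hxy => hxy.trans (h.2 x y)⟩

theorem le_apply_of_pos_imp {α : Type*} {f : α → ℝ} (hf : ∀ x, 0 ≤ f x) {s : ℝ} {b : α}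
    (h : 0 < s → s ≤ f b) : s ≤ f b :=
  (le_or_gt s 0).elim (fun hs => hs.trans (hf b)) h

theorem isFuzzyFilter_of_isFilter'_levelSet (hμ0 : ∀ x, 0 ≤ μ x)
    (h : ∀ t : ℝ, 0 < t → ∀ a, t ≤ μ a → IsFilter' {x : L | t ≤ μ x}) : IsFuzzyFilter μ := by
  refine ⟨fun x => le_apply_of_pos_imp hμ0 fun hx => (h _ hx x le_rfl).1, fun x y => ?_⟩
  exact le_apply_of_pos_imp hμ0 fun hs =>
    (h _ hs x (min_le_right _ _)).2 x y (min_le_right (μ (rimp x y)) (μ x))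
      (min_le_left (μ (rimp x y)) (μ x))

theorem isFuzzyMVFilter_of_isMVFilter_levelSet (hμ0 : ∀ x, 0 ≤ μ x)
    (h : ∀ t : ℝ, 0 < t → ∀ a, t ≤ μ a → IsMVFilter {x : L | t ≤ μ x}) :
    IsFuzzyMVFilter μ :=
  ⟨isFuzzyFilter_of_isFilter'_levelSet hμ0 fun t ht a ha => (h t ht a ha).1, fun x y =>
    le_apply_of_pos_imp hμ0 fun hxy => (h _ hxy _ le_rfl).2 x y (le_refl (μ (rimp x y)))⟩

theorem stmt_13 (μ : L → ℝ) (hμ0 : ∀ x : L, 0 ≤ μ x) (hμ1 : ∀ x : L, μ x ≤ 1) :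
    (∀ t : ℝ, 0 < t → t ≤ 1 → ({x : L | t ≤ μ x} = ∅ ∨ IsMVFilter {x : L | t ≤ μ x})) ↔ IsFuzzyMVFilter μ := by
  constructor
  · intro h
    refine isFuzzyMVFilter_of_isMVFilter_levelSet hμ0 fun t ht a ha => ?_
    exact (h t ht (ha.trans (hμ1 a))).resolve_left (Set.nonempty_iff_ne_empty.mp ⟨a, ha⟩)
  · intro h t _ _
    exact (Set.eq_empty_or_nonempty _).imp_right h.isMVFilter_levelSet
end
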